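/- Let p > 0 and ρ > 0. There exist constants C₁, C₂ > 0 (depending only on p, ρ and ‖T*T‖) and ᾱ ∈ (0,1) such that for every α ∈ (0,ᾱ], every w ∈ X with ‖w‖ ≤ ρ, every δ > 0 and every y^δ ∈ Y with ‖y^δ − T x†‖ ≤ δ, where x† = f_p(T*T)w, the regularized solution x_α^δ = g_α(T*T)T*y^δ satisfies ‖x† − x_α^δ‖ ≤ C₁·(−ln α)^{−p} + C₂·δ/√α. -/

import Mathlib

open ContinuousLinearMap

/-- The generator function `g_α(λ) = 1/(λ + (1 − λ^{√α})²)` with `g_α(0) = 1`,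
where `λ^{√α} = exp(√α · log λ)`. -/
noncomputable def genFun (α : ℝ) : ℝ → ℝ := fun t =>
  if t = 0 then 1 else 1 / (t + (1 - Real.exp (Real.sqrt α * Real.log t)) ^ 2)

/-- `f_p(λ) = (−log λ)^{−p}` (with `f_p(0) = 0`, as `(-log 0)^{-p} = 0^{-p} = 0`). -/
noncomputable def fpFun (p : ℝ) : ℝ → ℝ := fun t => (-Real.log t) ^ (-p)

/-!
With `A = T*T`, `G = g_α(A)` and `x† = f_p(A) w`, the error splits as
`x† - G T* y^δ = (1 - G A) f_p(A) w - G T* (y^δ - T x†)`, and `‖h(A)‖ ≤ sup_{σ(A)} |h|` with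
`σ(A) ⊆ [0, e⁻¹]` reduces everything to two scalar bounds.

The residual `(1 - λ g_α(λ)) f_p(λ)` is `O((-ln α)^{-p})`: if `-ln λ ≥ -ln α / 2` then already
`f_p(λ) ≤ 2^p (-ln α)^{-p}`; otherwise `1 - λ g_α(λ) ≤ α ln² λ / λ = ln² λ · e^{ln α - ln λ}` is
exponentially small in `-ln α`.

For the noise, `‖G T*‖² = ‖G A G‖ = sup λ g_α(λ)²` by the C*-identity, and with
`u = (1 - λ^{√α})² ≥ ((1 - e⁻¹) √α)²` (convexity of `exp`) AM-GM gives `λ / (λ + u)² ≤ 1 / (4u)`,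
so `‖G T*‖ ≤ 1 / (2 (1 - e⁻¹) √α)`.
-/

section Scalar

open Real Set Filter

lemma rpow_le_mul_exp_half {x k : ℝ} (hx : 0 ≤ x) (hk : 0 < k) :
    x ^ k ≤ (2 * k) ^ k * exp (x / 2) := by
  have hlin : x ≤ 2 * k * exp (x / (2 * k)) := by
    have := add_one_le_exp (x / (2 * k))
    rw [← div_le_iff₀' (by positivity)]
    linarith
  calc x ^ k ≤ (2 * k * exp (x / (2 * k))) ^ k := rpow_le_rpow hx hlin hk.le
    _ = (2 * k) ^ k * exp (x / 2) := by
      rw [mul_rpow (by positivity) (exp_pos _).le, ← exp_mul]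
      field_simp

lemma one_sub_exp_neg_one_mul_le_one_sub_exp_neg {β : ℝ} (h0 : 0 ≤ β) (h1 : β ≤ 1) :
    (1 - exp (-1)) * β ≤ 1 - exp (-β) := by
  have h := convexOn_exp.2 (mem_univ 0) (mem_univ (-1)) (sub_nonneg.2 h1) h0 (by ring)
  simp only [smul_eq_mul, mul_zero, zero_add, mul_neg, mul_one, exp_zero] at h
  linarith

lemma genFun_eq_of_nonneg {α t : ℝ} (hα : 0 < α) (ht : 0 ≤ t) :
    genFun α t = 1 / (t + (1 - t ^ √α) ^ 2) := by
  rcases ht.eq_or_lt with rfl | ht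
  · simp [genFun, zero_rpow (sqrt_pos.2 hα).ne']
  · rw [genFun, if_neg ht.ne', rpow_def_of_pos ht, mul_comm]

lemma continuousOn_genFun {α : ℝ} (hα : 0 < α) : ContinuousOn (genFun α) (Ici 0) := by
  have hden : ∀ t ∈ Ici (0 : ℝ), t + (1 - t ^ √α) ^ 2 ≠ 0 := by
    intro t (ht : 0 ≤ t)
    rcases ht.eq_or_lt with rfl | ht
    · simp [zero_rpow (sqrt_pos.2 hα).ne']
    · positivity
  refine ContinuousOn.congr ?_ fun t ht => genFun_eq_of_nonneg hα ht
  exact continuousOn_const.div (continuousOn_id.add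
    ((continuousOn_const.sub (continuous_rpow_const (sqrt_nonneg α)).continuousOn).pow 2)) hden

lemma continuousOn_fpFun {p : ℝ} (hp : 0 < p) : ContinuousOn (fpFun p) (Ico 0 1) := by
  intro t ⟨ht0, ht1⟩
  rcases ht0.eq_or_lt with rfl | ht0
  · have hsub : Ico (0 : ℝ) 1 ⊆ insert 0 (Ioi 0) := fun s ⟨hs, _⟩ => by
      rcases hs.eq_or_lt with rfl | hs
      exacts [mem_insert _ _, mem_insert_of_mem _ hs]
    refine ContinuousWithinAt.mono ?_ hsub
    rw [continuousWithinAt_insert_self, ContinuousWithinAt, fpFun, log_zero, neg_zero,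
      zero_rpow (neg_ne_zero.2 hp.ne')]
    exact (tendsto_rpow_neg_atTop hp).comp (tendsto_neg_atBot_atTop.comp tendsto_log_nhdsGT_zero)
  · have : -log t ≠ 0 := by linarith [log_neg ht0 ht1]
    exact ((continuousAt_log ht0.ne').neg.rpow_const (Or.inl this)).continuousWithinAt

lemma sq_mul_exp_neg_half_le {M p : ℝ} (hM : 0 < M) (hp : -2 < p) :
    M ^ 2 * exp (-(M / 2)) ≤ (2 * (p + 2)) ^ (p + 2) * M ^ (-p) := by
  have hsplit : M ^ 2 = M ^ (p + 2) * M ^ (-p) := by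
    rw [← rpow_add hM, add_neg_cancel_comm, rpow_two]
  calc M ^ 2 * exp (-(M / 2)) = M ^ (p + 2) * exp (-(M / 2)) * M ^ (-p) := by rw [hsplit]; ring
    _ ≤ (2 * (p + 2)) ^ (p + 2) * exp (M / 2) * exp (-(M / 2)) * M ^ (-p) := by
      gcongr; exact rpow_le_mul_exp_half hM.le (by linarith)
    _ = (2 * (p + 2)) ^ (p + 2) * M ^ (-p) := by
      rw [exp_neg]; field_simp

lemma mul_sqrt_le_one_sub_rpow_sqrt {α t : ℝ} (hα1 : α ≤ 1) (ht0 : 0 ≤ t)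
    (ht : t ≤ exp (-1)) : (1 - exp (-1)) * √α ≤ 1 - t ^ √α := by
  have hpow : t ^ √α ≤ exp (-√α) := by
    calc t ^ √α ≤ exp (-1) ^ √α := rpow_le_rpow ht0 ht (sqrt_nonneg α)
      _ = exp (-√α) := by rw [← exp_mul, neg_one_mul]
  linarith [one_sub_exp_neg_one_mul_le_one_sub_exp_neg (sqrt_nonneg α) (sqrt_le_one.2 hα1)]

lemma genFun_sq_mul_le {α t : ℝ} (hα0 : 0 < α) (hα1 : α ≤ 1) (ht0 : 0 ≤ t)
    (ht : t ≤ exp (-1)) : genFun α t ^ 2 * t ≤ (1 / (2 * (1 - exp (-1)) * √α)) ^ 2 := by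
  rcases ht0.eq_or_lt with rfl | ht0
  · rw [mul_zero]; positivity
  have hc : 0 < (1 - exp (-1)) * √α :=
    mul_pos (sub_pos.2 (exp_lt_one_iff.2 (by norm_num))) (sqrt_pos.2 hα0)
  set u := (1 - t ^ √α) ^ 2
  have hu : ((1 - exp (-1)) * √α) ^ 2 ≤ u :=
    pow_le_pow_left₀ hc.le (mul_sqrt_le_one_sub_rpow_sqrt hα1 ht0.le ht) 2
  have hu0 : 0 < u := (pow_pos hc 2).trans_le hu
  rw [genFun_eq_of_nonneg hα0 ht0.le]
  calc (1 / (t + u)) ^ 2 * t = t / (t + u) ^ 2 := by rw [div_pow, one_pow, one_div_mul_eq_div]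
    _ ≤ t / (4 * t * u) :=
      div_le_div_of_nonneg_left ht0.le (by positivity) (four_mul_le_sq_add t u)
    _ = 1 / (4 * u) := by field_simp
    _ ≤ 1 / (4 * ((1 - exp (-1)) * √α) ^ 2) := by gcongr
    _ = (1 / (2 * (1 - exp (-1)) * √α)) ^ 2 := by generalize 1 - exp (-1) = c; ring

lemma genFun_mul_le_one {α t : ℝ} (hα : 0 < α) (ht : 0 ≤ t) : genFun α t * t ≤ 1 := by
  rcases ht.eq_or_lt with rfl | ht
  · simp
  rw [genFun_eq_of_nonneg hα ht.le, one_div_mul_eq_div]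
  exact div_le_one_of_le₀ (le_add_of_nonneg_right (sq_nonneg _)) (by positivity)

lemma one_sub_genFun_mul_le {α t : ℝ} (hα : 0 < α) (ht0 : 0 < t) (ht1 : t ≤ 1) :
    1 - genFun α t * t ≤ α * log t ^ 2 / t := by
  set u := (1 - t ^ √α) ^ 2
  have hu : u ≤ α * log t ^ 2 := by
    have hlow : 0 ≤ 1 - t ^ √α := sub_nonneg.2 (rpow_le_one ht0.le ht1 (sqrt_nonneg α))
    have hup : 1 - t ^ √α ≤ √α * -log t := by
      rw [rpow_def_of_pos ht0]; linarith [add_one_le_exp (log t * √α)]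
    calc u ≤ (√α * -log t) ^ 2 := pow_le_pow_left₀ hlow hup 2
      _ = α * log t ^ 2 := by rw [mul_pow, sq_sqrt hα.le, neg_sq]
  have htu : 0 < t + u := by positivity
  rw [genFun_eq_of_nonneg hα ht0.le]
  calc 1 - 1 / (t + u) * t = u / (t + u) := by field_simp; ring
    _ ≤ u / t := div_le_div_of_nonneg_left (sq_nonneg _) ht0 (le_add_of_nonneg_right (sq_nonneg _))
    _ ≤ α * log t ^ 2 / t := by gcongr

lemma abs_one_sub_genFun_mul_fpFun_le {p α t : ℝ} (hp : 0 < p) (hα0 : 0 < α) (hα1 : α < 1)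
    (ht0 : 0 ≤ t) (ht : t ≤ exp (-1)) :
    |(1 - genFun α t * t) * fpFun p t| ≤ (2 ^ p + (2 * (p + 2)) ^ (p + 2)) * (-log α) ^ (-p) := by
  have hK : 0 ≤ (-log α) ^ (-p) := rpow_nonneg (neg_nonneg.2 (log_nonpos hα0.le hα1.le)) _
  rcases ht0.eq_or_lt with rfl | ht0
  · simp only [fpFun, log_zero, neg_zero, zero_rpow (neg_ne_zero.2 hp.ne'), mul_zero, abs_zero]
    positivity
  set L := -log t
  set M := -log α
  have hL : 1 ≤ L := by linarith [(log_le_iff_le_exp ht0).2 ht]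
  have hM : 0 < M := neg_pos.2 (log_neg hα0 hα1)
  have hr0 : 0 ≤ 1 - genFun α t * t := sub_nonneg.2 (genFun_mul_le_one hα0 ht0.le)
  have hr1 : 1 - genFun α t * t ≤ 1 := by
    rw [genFun_eq_of_nonneg hα0 ht0.le]; simp only [sub_le_self_iff]; positivity
  have hf0 : 0 ≤ fpFun p t := rpow_nonneg (by linarith) _
  have hf1 : fpFun p t ≤ 1 := rpow_le_one_of_one_le_of_nonpos hL (by linarith)
  rw [abs_of_nonneg (mul_nonneg hr0 hf0)]
  rcases le_or_gt (M / 2) L with hML | hLM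
  · calc (1 - genFun α t * t) * fpFun p t ≤ fpFun p t := mul_le_of_le_one_left hf0 hr1
      _ ≤ (M / 2) ^ (-p) := rpow_le_rpow_of_nonpos (by positivity) hML (by linarith)
      _ = 2 ^ p * M ^ (-p) := by
        rw [div_rpow hM.le zero_le_two, rpow_neg zero_le_two]; field_simp
      _ ≤ _ := by gcongr; exact le_add_of_nonneg_right (by positivity)
  · have hαt : α / t = exp (L - M) := by
      rw [show L - M = log α - log t by ring, exp_sub, exp_log hα0, exp_log ht0]
    calc (1 - genFun α t * t) * fpFun p t ≤ 1 - genFun α t * t := mul_le_of_le_one_right hr0 hf1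
      _ ≤ α * log t ^ 2 / t :=
        one_sub_genFun_mul_le hα0 ht0 (ht.trans (exp_le_one_iff.2 (by norm_num)))
      _ = L ^ 2 * exp (L - M) := by rw [← hαt, neg_sq]; ring
      _ ≤ M ^ 2 * exp (-(M / 2)) := by gcongr <;> linarith
      _ ≤ (2 * (p + 2)) ^ (p + 2) * M ^ (-p) := sq_mul_exp_neg_half_le hM (by linarith)
      _ ≤ _ := by gcongr; exact le_add_of_nonneg_left (by positivity)

end Scalar

section Operator

variable {X Y : Type*} [NormedAddCommGroup X] [InnerProductSpace ℂ X] [CompleteSpace X]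
  [NormedAddCommGroup Y] [InnerProductSpace ℂ Y] [CompleteSpace Y]

lemma spectrum_adjoint_comp_self_subset_Icc (T : X →L[ℂ] Y) :
    spectrum ℝ (adjoint T ∘L T) ⊆ Set.Icc 0 ‖adjoint T ∘L T‖ := by
  intro x hx
  have hpos : 0 ≤ adjoint T ∘L T := (nonneg_iff_isPositive _).2 (isPositive_adjoint_comp_self T)
  refine ⟨spectrum_nonneg_of_nonneg hpos hx, (le_abs_self x).trans ?_⟩
  simpa using (spectrum.norm_le_norm_mul_of_mem hx).trans
    (mul_le_of_le_one_right (norm_nonneg _) norm_id_le)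

lemma norm_cfc_comp_adjoint_le {T : X →L[ℂ] Y} {g : ℝ → ℝ} {c : ℝ} (hc : 0 ≤ c)
    (hg : ContinuousOn g (spectrum ℝ (adjoint T ∘L T)))
    (hbound : ∀ t ∈ spectrum ℝ (adjoint T ∘L T), g t ^ 2 * t ≤ c ^ 2) :
    ‖cfc g (adjoint T ∘L T) ∘L adjoint T‖ ≤ c := by
  set A := adjoint T ∘L T
  have hA : IsSelfAdjoint A := (isPositive_adjoint_comp_self T).isSelfAdjoint
  have hspec := spectrum_adjoint_comp_self_subset_Icc T
  set B := cfc g A ∘L adjoint T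
  have hcfc : cfc (fun t => g t ^ 2 * t) A = cfc g A * A * cfc g A := by
    calc cfc (fun t => g t ^ 2 * t) A = cfc (fun t => g t * t * g t) A :=
          cfc_congr fun t _ => by ring
      _ = cfc g A * A * cfc g A := by
        rw [cfc_mul (fun t => g t * t) g A (hg.mul (continuousOn_id' _)) hg,
          cfc_mul g (fun t => t) A hg (continuousOn_id' _), cfc_id' ℝ A hA]
  have hBB : adjoint (adjoint B) ∘L adjoint B = cfc (fun t => g t ^ 2 * t) A := by
    rw [adjoint_adjoint, adjoint_comp, adjoint_adjoint, IsSelfAdjoint.cfc.adjoint_eq, hcfc]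
    rfl
  have hsq : ‖B‖ * ‖B‖ ≤ c ^ 2 := by
    rw [← LinearIsometryEquiv.norm_map adjoint B, ← norm_adjoint_comp_self, hBB]
    refine norm_cfc_le (sq_nonneg c) fun t ht => ?_
    rw [Real.norm_of_nonneg (mul_nonneg (sq_nonneg _) (hspec ht).1)]
    exact hbound t ht
  nlinarith [norm_nonneg B]

lemma norm_sub_cfc_apply_adjoint_le {T : X →L[ℂ] Y} {f g : ℝ → ℝ}
    (hf : ContinuousOn f (spectrum ℝ (adjoint T ∘L T)))
    (hg : ContinuousOn g (spectrum ℝ (adjoint T ∘L T))) (w : X) (y : Y) :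
    ‖cfc f (adjoint T ∘L T) w - cfc g (adjoint T ∘L T) (adjoint T y)‖ ≤
      ‖cfc (fun t => (1 - g t * t) * f t) (adjoint T ∘L T)‖ * ‖w‖ +
        ‖cfc g (adjoint T ∘L T) ∘L adjoint T‖ * ‖y - T (cfc f (adjoint T ∘L T) w)‖ := by
  set A := adjoint T ∘L T
  have hA : IsSelfAdjoint A := (isPositive_adjoint_comp_self T).isSelfAdjoint
  have hres : cfc (fun t => (1 - g t * t) * f t) A = cfc f A - cfc g A * A * cfc f A := by
    calc cfc (fun t => (1 - g t * t) * f t) A = cfc (fun t => f t - g t * t * f t) A :=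
          cfc_congr fun t _ => by ring
      _ = cfc f A - cfc g A * A * cfc f A := by
        rw [cfc_sub f (fun t => g t * t * f t) A hf ((hg.mul (continuousOn_id' _)).mul hf),
          cfc_mul (fun t => g t * t) f A (hg.mul (continuousOn_id' _)) hf,
          cfc_mul g (fun t => t) A hg (continuousOn_id' _), cfc_id' ℝ A hA]
  have hsplit : cfc f A w - cfc g A (adjoint T y) =
      cfc (fun t => (1 - g t * t) * f t) A w - (cfc g A ∘L adjoint T) (y - T (cfc f A w)) := by
    rw [hres]
    simp [A]
  rw [hsplit]
  exact (norm_sub_le _ _).trans (add_le_add (le_opNorm _ _) (le_opNorm _ _))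

end Operator

theorem stmt8_general {X Y : Type*} [NormedAddCommGroup X] [InnerProductSpace ℂ X]
    [CompleteSpace X] [NormedAddCommGroup Y] [InnerProductSpace ℂ Y] [CompleteSpace Y]
    (T : X →L[ℂ] Y)
    (hTnorm : ‖(adjoint T) ∘L T‖ ≤ Real.exp (-1))
    (p ρ : ℝ) (hp : 0 < p) (hρ : 0 < ρ) :
    ∃ C₁ > (0 : ℝ), ∃ C₂ > (0 : ℝ), ∃ αbar ∈ Set.Ioo (0 : ℝ) 1,
      ∀ α ∈ Set.Ioc (0 : ℝ) αbar, ∀ w : X, ‖w‖ ≤ ρ → ∀ δ > (0 : ℝ), ∀ yδ : Y,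
        ‖yδ - T (cfc (fpFun p) ((adjoint T) ∘L T) w)‖ ≤ δ →
        ‖cfc (fpFun p) ((adjoint T) ∘L T) w -
            cfc (genFun α) ((adjoint T) ∘L T) ((adjoint T) yδ)‖ ≤
          C₁ * (-Real.log α) ^ (-p) + C₂ * δ / Real.sqrt α := by
  set A := adjoint T ∘L T
  have hspec : spectrum ℝ A ⊆ Set.Icc 0 (Real.exp (-1)) :=
    (spectrum_adjoint_comp_self_subset_Icc T).trans (Set.Icc_subset_Icc_right hTnorm)
  have he : Real.exp (-1) < 1 := Real.exp_lt_one_iff.2 (by norm_num)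
  have hc : 0 < 1 - Real.exp (-1) := sub_pos.2 he
  set K : ℝ := 2 ^ p + (2 * (p + 2)) ^ (p + 2)
  have hK : 0 < K := by positivity
  refine ⟨ρ * K, mul_pos hρ hK, 1 / (2 * (1 - Real.exp (-1))), by positivity, Real.exp (-1),
    ⟨Real.exp_pos _, he⟩, ?_⟩
  rintro α ⟨hα0, hα⟩ w hw δ - yδ hyδ
  have hα1 : α < 1 := hα.trans_lt he
  have hf : ContinuousOn (fpFun p) (spectrum ℝ A) :=
    (continuousOn_fpFun hp).mono fun t ht => ⟨(hspec ht).1, (hspec ht).2.trans_lt he⟩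
  have hg : ContinuousOn (genFun α) (spectrum ℝ A) :=
    (continuousOn_genFun hα0).mono fun t ht => (hspec ht).1
  have hKM : 0 ≤ K * (-Real.log α) ^ (-p) :=
    mul_nonneg hK.le (Real.rpow_nonneg (neg_nonneg.2 (Real.log_nonpos hα0.le hα1.le)) _)
  have hres : ‖cfc (fun t => (1 - genFun α t * t) * fpFun p t) A‖ ≤ K * (-Real.log α) ^ (-p) :=
    norm_cfc_le hKM fun t ht =>
      abs_one_sub_genFun_mul_fpFun_le hp hα0 hα1 (hspec ht).1 (hspec ht).2
  have hnoise : ‖cfc (genFun α) A ∘L adjoint T‖ ≤ 1 / (2 * (1 - Real.exp (-1)) * Real.sqrt α) :=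
    norm_cfc_comp_adjoint_le (by positivity) hg fun t ht =>
      genFun_sq_mul_le hα0 hα1.le (hspec ht).1 (hspec ht).2
  calc _ ≤ _ := norm_sub_cfc_apply_adjoint_le hf hg w yδ
    _ ≤ K * (-Real.log α) ^ (-p) * ρ + 1 / (2 * (1 - Real.exp (-1)) * Real.sqrt α) * δ :=
      add_le_add (mul_le_mul hres hw (norm_nonneg _) hKM)
        (mul_le_mul hnoise hyδ (norm_nonneg _) (by positivity))
    _ = _ := by field_simp

/-- Let `T : X → Y` be a bounded injective linear operator between complex Hilbert
spaces with `‖T*T‖ ≤ e⁻¹`. Let `p > 0` and `ρ > 0`. There exist constants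
`C₁, C₂ > 0` and `ᾱ ∈ (0,1)` such that for every `α ∈ (0,ᾱ]`, every `w` with
`‖w‖ ≤ ρ`, every `δ > 0` and every `y^δ` with `‖y^δ − T x†‖ ≤ δ`, where
`x† = f_p(T*T)w`, the regularized solution `x_α^δ = g_α(T*T)T*y^δ` satisfies
`‖x† − x_α^δ‖ ≤ C₁·(−log α)^{−p} + C₂·δ/√α`. -/
theorem stmt8 {X Y : Type*} [NormedAddCommGroup X] [InnerProductSpace ℂ X]
    [CompleteSpace X] [NormedAddCommGroup Y] [InnerProductSpace ℂ Y] [CompleteSpace Y]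
    (T : X →L[ℂ] Y) (hTinj : Function.Injective T)
    (hTnorm : ‖(adjoint T) ∘L T‖ ≤ Real.exp (-1))
    (p ρ : ℝ) (hp : 0 < p) (hρ : 0 < ρ) :
    ∃ C₁ > (0 : ℝ), ∃ C₂ > (0 : ℝ), ∃ αbar ∈ Set.Ioo (0 : ℝ) 1,
      ∀ α ∈ Set.Ioc (0 : ℝ) αbar, ∀ w : X, ‖w‖ ≤ ρ → ∀ δ > (0 : ℝ), ∀ yδ : Y,
        ‖yδ - T (cfc (fpFun p) ((adjoint T) ∘L T) w)‖ ≤ δ →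
        ‖cfc (fpFun p) ((adjoint T) ∘L T) w -
            cfc (genFun α) ((adjoint T) ∘L T) ((adjoint T) yδ)‖ ≤
          C₁ * (-Real.log α) ^ (-p) + C₂ * δ / Real.sqrt α :=
  stmt8_general T hTnorm p ρ hp hρ
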